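/- arXiv:2511.17994 — 6 statements merged into one kernel-verified Lean document; each statement's English description precedes it below -/
import Mathlib

section
/- For α ∈ (0,1), define a_j = ∏_{k=1}^{j} (1 - α^{2k-1})/(1 - α^{2k}). Then for every integer N ≥ 0, the convolution identity ∑_{j=0}^{N} α^j · a_{N-j} · a_j = 1 holds. -/
open Finset

noncomputable def Aa (α : ℝ) (j : ℕ) : ℝ :=
  ∏ k ∈ Finset.Icc 1 j, (1 - α^(2*k-1))/(1 - α^(2*k))

lemma Aa_zero (α : ℝ) : Aa α 0 = 1 := by simp [Aa]

lemma Aa_rec (α : ℝ) (hα : α ∈ Set.Ioo (0:ℝ) 1) (m : ℕ) :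
    Aa α (m+1) - Aa α m = α^(2*m+2) * Aa α (m+1) - α^(2*m+1) * Aa α m := by
  have hlt : α^(2*m+2) < 1 := pow_lt_one₀ hα.1.le hα.2 (by omega)
  have hne : (1 : ℝ) - α^(2*m+2) ≠ 0 := by linarith
  have e1 : 2*(m+1)-1 = 2*m+1 := by omega
  have e2 : 2*(m+1) = 2*m+2 := by omega
  have h1 : Aa α (m+1) = Aa α m * ((1 - α^(2*m+1))/(1 - α^(2*m+2))) := by
    unfold Aa
    rw [Finset.prod_Icc_succ_top (by omega : 1 ≤ m+1), e1, e2]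
  have h2 : Aa α (m+1) * (1 - α^(2*m+2)) = Aa α m * (1 - α^(2*m+1)) := by
    rw [h1]; field_simp
  linarith [h2]

lemma main_lemma (α : ℝ) (hα : α ∈ Set.Ioo (0:ℝ) 1) (N : ℕ) :
    ∑ j ∈ Finset.range (N+1), α ^ j * Aa α (N - j) * Aa α j = 1 := by
  induction N with
  | zero => simp [Aa]
  | succ N ih =>
    set S1 : ℝ := ∑ j ∈ Finset.range (N+2), α ^ j * Aa α (N+1 - j) * Aa α j with hS1
    set S0 : ℝ := ∑ j ∈ Finset.range (N+1), α ^ j * Aa α (N - j) * Aa α j with hS0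
    -- reflected sums
    have F1 : ∑ j ∈ Finset.range (N+2), α ^ (N+1-j) * Aa α (N+1-j) * Aa α j = S1 := by
      rw [hS1, ← Finset.sum_range_reflect (fun j => α ^ j * Aa α (N+1 - j) * Aa α j) (N+2)]
      apply Finset.sum_congr rfl
      intro j hj
      have hj' : j ≤ N+1 := by simpa [Nat.lt_succ_iff] using Finset.mem_range.mp hj
      have e1 : N + 2 - 1 - j = N + 1 - j := by omega
      have e2 : N + 1 - (N + 1 - j) = j := by omega
      rw [e1, e2]
      ring
    have F0 : ∑ j ∈ Finset.range (N+1), α ^ (N-j) * Aa α (N-j) * Aa α j = S0 := by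
      rw [hS0, ← Finset.sum_range_reflect (fun j => α ^ j * Aa α (N - j) * Aa α j) (N+1)]
      apply Finset.sum_congr rfl
      intro j hj
      have hj' : j ≤ N := by simpa [Nat.lt_succ_iff] using Finset.mem_range.mp hj
      have e1 : N + 1 - 1 - j = N - j := by omega
      have e2 : N - (N - j) = j := by omega
      rw [e1, e2]
      ring
    -- termwise key identity
    have H : ∑ j ∈ Finset.range (N+1),
          (α ^ j * Aa α (N+1 - j) * Aa α j - α ^ j * Aa α (N - j) * Aa α j)
        = ∑ j ∈ Finset.range (N+1),
          (α^(N+1) * (α ^ (N+1-j) * Aa α (N+1-j) * Aa α j)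
            - α^(N+1) * (α ^ (N-j) * Aa α (N-j) * Aa α j)) := by
      apply Finset.sum_congr rfl
      intro j hj
      have hj' : j ≤ N := by simpa [Nat.lt_succ_iff] using Finset.mem_range.mp hj
      set m := N - j with hm
      have hmj : m + j = N := by omega
      have e1 : N + 1 - j = m + 1 := by omega
      have e2 : N + 1 = m + j + 1 := by omega
      rw [e1, e2]
      have hrec := Aa_rec α hα m
      linear_combination (α ^ j * Aa α j) * hrec
    -- assemble
    have split1 : S1 = (∑ j ∈ Finset.range (N+1), α ^ j * Aa α (N+1 - j) * Aa α j)
        + α^(N+1) * Aa α (N+1) := by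
      rw [hS1, Finset.sum_range_succ]
      simp [Aa_zero]
    have split1' : ∑ j ∈ Finset.range (N+2), α ^ (N+1-j) * Aa α (N+1-j) * Aa α j
        = (∑ j ∈ Finset.range (N+1), α ^ (N+1-j) * Aa α (N+1-j) * Aa α j)
          + Aa α (N+1) := by
      rw [Finset.sum_range_succ]
      simp [Aa_zero]
    rw [Finset.sum_sub_distrib, Finset.sum_sub_distrib, ← Finset.mul_sum (Finset.range (N+1)) _ (α^(N+1)), ← Finset.mul_sum (Finset.range (N+1)) _ (α^(N+1))] at H
    -- Name the partial sums
    set T1 : ℝ := ∑ j ∈ Finset.range (N+1), α ^ j * Aa α (N+1 - j) * Aa α j with hT1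
    set R1 : ℝ := ∑ j ∈ Finset.range (N+1), α ^ (N+1-j) * Aa α (N+1-j) * Aa α j with hR1
    -- From F1, split1': R1 + Aa α (N+1) = S1
    have F1' : R1 + Aa α (N+1) = S1 := by rw [← F1, split1']
    have F0' : (∑ j ∈ Finset.range (N+1), α ^ (N-j) * Aa α (N-j) * Aa α j) = S0 := F0
    have F0'' : (∑ x ∈ Finset.range (N+1), α ^ x * Aa α (N - x) * Aa α x) = S0 := rfl
    rw [F0''] at H
    rw [F0] at H
    have key : S1 - S0 = α^(N+1) * (S1 - S0) := by
      linear_combination H + split1 + α^(N+1) * F1'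
    have hne : α^(N+1) < 1 := pow_lt_one₀ hα.1.le hα.2 (by omega)
    have hz : (S1 - S0) * (1 - α^(N+1)) = 0 := by linear_combination key
    have hS : S1 = S0 := by
      rcases mul_eq_zero.mp hz with h | h
      · linarith [sub_eq_zero.mp h]
      · linarith
    show S1 = 1
    exact hS.trans ih

theorem stmt0 (α : ℝ) (hα : α ∈ Set.Ioo (0:ℝ) 1) (N : ℕ) :
    ∑ j ∈ Finset.range (N+1),
      α ^ j * (∏ k ∈ Finset.Icc 1 (N - j), (1 - α^(2*k-1))/(1 - α^(2*k))) *
      (∏ k ∈ Finset.Icc 1 j, (1 - α^(2*k-1))/(1 - α^(2*k))) = 1 := by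
  exact main_lemma α hα N
end

section
/- For α ∈ (0,1), define a_j = ∏_{k=1}^{j} (1 - α^{2k-1})/(1 - α^{2k}) and b_j = ((α - 1)/(α(1 - α^{2j-1}))) · ∏_{k=1}^{j} (1 - α^{2k-1})/(1 - α^{2k}) for j ≥ 1, with a_0 = 1 and b_0 = (α-1)/(α(1-α^{-1})) = 1. Then for every integer N ≥ 1, ∑_{j=0}^{N} α^j · a_{N-j} · b_j = 0, and the sum equals 1 when N = 0. -/
noncomputable def aSeq (α : ℝ) (j : ℕ) : ℝ :=
  ∏ k ∈ Finset.Icc 1 j, (1 - α^(2*k-1))/(1 - α^(2*k))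

noncomputable def bSeq (α : ℝ) (j : ℕ) : ℝ :=
  if j = 0 then 1 else ((α - 1)/(α * (1 - α^(2*j-1)))) * aSeq α j

lemma one_sub_pow_ne (α : ℝ) (hα : α ∈ Set.Ioo (0:ℝ) 1) (n : ℕ) (hn : n ≠ 0) :
    1 - α ^ n ≠ 0 := by
  have : α ^ n < 1 := pow_lt_one₀ hα.1.le hα.2 hn
  linarith

lemma aSeq_zero (α : ℝ) : aSeq α 0 = 1 := by simp [aSeq]

lemma aSeq_succ (α : ℝ) (j : ℕ) :
    aSeq α (j+1) = aSeq α j * ((1 - α^(2*j+1))/(1 - α^(2*j+2))) := by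
  unfold aSeq
  rw [Finset.prod_Icc_succ_top (by omega : 1 ≤ j+1)]
  have h1 : 2*(j+1)-1 = 2*j+1 := by omega
  have h2 : 2*(j+1) = 2*j+2 := by omega
  rw [h1, h2]

lemma bSeq_succ (α : ℝ) (j : ℕ) :
    bSeq α (j+1) = ((α - 1)/(α * (1 - α^(2*j+1)))) * aSeq α (j+1) := by
  have h1 : 2*(j+1)-1 = 2*j+1 := by omega
  simp [bSeq, h1]

lemma key (α : ℝ) (hα : α ∈ Set.Ioo (0:ℝ) 1) (N m : ℕ) (hN : 1 ≤ N) (hm : m ≤ N) :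
    ∑ j ∈ Finset.range (m+1), α ^ j * aSeq α (N - j) * bSeq α j
      = α^m * aSeq α (N-m) * aSeq α m * (1 - α^(2*(N-m)))/(1 - α^(2*N)) := by
  have hα0 : α ≠ 0 := ne_of_gt hα.1
  induction m with
  | zero =>
      have h1 : ∑ j ∈ Finset.range (0+1), α ^ j * aSeq α (N - j) * bSeq α j
          = aSeq α N := by simp [bSeq]
      rw [h1]
      simp only [pow_zero, Nat.sub_zero, aSeq_zero, one_mul, mul_one]
      rw [mul_div_assoc, div_self (one_sub_pow_ne α hα _ (by omega)), mul_one]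
  | succ m ih =>
      have hmN : m ≤ N := by omega
      obtain ⟨d, rfl⟩ : ∃ d, N = m + 1 + d := ⟨N - (m+1), by omega⟩
      have hNm : m + 1 + d - m = d + 1 := by omega
      have hNm1 : m + 1 + d - (m + 1) = d := by omega
      rw [Finset.sum_range_succ, ih hmN, hNm1, hNm]
      rw [aSeq_succ α d, aSeq_succ α m, bSeq_succ α m, aSeq_succ α m]
      have h2N : 2*(m+1+d) = 2*m + 2*d + 2 := by omega
      have h2d : 2*(d+1) = 2*d + 2 := by omega
      rw [h2N, h2d]
      have e1 : (1:ℝ) - α^(2*d+2) ≠ 0 := one_sub_pow_ne α hα _ (by omega)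
      have e2 : (1:ℝ) - α^(2*m+2) ≠ 0 := one_sub_pow_ne α hα _ (by omega)
      have e3 : (1:ℝ) - α^(2*m+1) ≠ 0 := one_sub_pow_ne α hα _ (by omega)
      have e4 : (1:ℝ) - α^(2*m+2*d+2) ≠ 0 := one_sub_pow_ne α hα _ (by omega)
      field_simp
      ring

theorem stmt1 (α : ℝ) (hα : α ∈ Set.Ioo (0:ℝ) 1) (N : ℕ) :
    ∑ j ∈ Finset.range (N+1), α ^ j * aSeq α (N - j) * bSeq α j
      = if N = 0 then 1 else 0 := by
  rcases Nat.eq_zero_or_pos N with h | h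
  · subst h
    simp [aSeq_zero, bSeq]
  · rw [if_neg (by omega), key α hα N N h le_rfl]
    simp
end

section
/- For every n ≥ 1 and every α ∈ (0,1), ∏_{k=1}^{n} (1 - α^{2k-1})/(1 - α^{2k}) ≥ ∏_{k=1}^{n} (2k-1)/(2k) = binom(2n, n)/4^n. -/
open Finset

lemma prodEq (n : ℕ) :
    (∏ k ∈ Finset.Icc 1 n, ((2*(k:ℝ)-1)/(2*(k:ℝ)))) = (Nat.choose (2*n) n : ℝ) / 4^n := by
  induction n with
  | zero => simp
  | succ n ih =>
      rw [Finset.prod_Icc_succ_top (by omega : 1 ≤ n+1), ih]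
      have h := Nat.succ_mul_centralBinom_succ n
      rw [Nat.centralBinom, Nat.centralBinom] at h
      have h' : ((n+1 : ℕ) : ℝ) * (Nat.choose (2*(n+1)) (n+1) : ℝ)
          = 2 * (2*(n:ℝ)+1) * (Nat.choose (2*n) n : ℝ) := by
        exact_mod_cast congrArg (Nat.cast : ℕ → ℝ) h
      have hn1 : ((n:ℝ)+1) ≠ 0 := by positivity
      push_cast at h' ⊢
      field_simp
      linear_combination (-2*(4:ℝ)^n) * h'

lemma termIneq (m : ℕ) (hm : 1 ≤ m) (α : ℝ) (h0 : 0 < α) (h1 : α < 1) :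
    ((m:ℝ))/((m:ℝ)+1) ≤ (1 - α^m)/(1 - α^(m+1)) := by
  set S : ℕ → ℝ := fun j => ∑ i ∈ Finset.range j, α^i with hS
  have hgeom : ∀ j, (1 - α^j) = (1 - α) * S j := by
    intro j
    have := geom_sum_mul α j
    simp only [hS]
    nlinarith [this]
  have hSpos : ∀ j, 1 ≤ j → 0 < S j := by
    intro j hj
    apply Finset.sum_pos (fun i _ => pow_pos h0 i)
    simp [Finset.nonempty_range_iff]; omega
  have hkey : (m:ℝ) * α^m ≤ S m := by
    have := Finset.card_nsmul_le_sum (Finset.range m) (fun i => α^i) (α^m)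
      (fun i hi => pow_le_pow_of_le_one h0.le h1.le (by simp at hi; omega))
    simpa [nsmul_eq_mul, mul_comm] using this
  have hSsucc : S (m+1) = S m + α^m := by simp [hS, Finset.sum_range_succ]
  have h1a : 0 < 1 - α := by linarith
  rw [hgeom m, hgeom (m+1)]
  rw [div_le_div_iff₀ (by positivity : (0:ℝ) < (m:ℝ)+1) (mul_pos h1a (hSpos (m+1) (by omega)))]
  have hSm := hSpos m hm
  have hSm1 := hSpos (m+1) (by omega)
  rw [hSsucc]
  nlinarith [hkey, hSm, pow_pos h0 m]

theorem stmt3 (n : ℕ) (hn : 1 ≤ n) (α : ℝ) (hα : α ∈ Set.Ioo (0:ℝ) 1) :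
    ((Nat.choose (2*n) n : ℝ) / 4^n ≤
      ∏ k ∈ Finset.Icc 1 n, (1 - α^(2*k-1))/(1 - α^(2*k))) ∧
    (∏ k ∈ Finset.Icc 1 n, ((2*(k:ℝ)-1)/(2*(k:ℝ)))) = (Nat.choose (2*n) n : ℝ) / 4^n := by
  obtain ⟨h0, h1⟩ := hα
  refine ⟨?_, prodEq n⟩
  rw [← prodEq n]
  apply Finset.prod_le_prod
  · intro k hk
    simp only [Finset.mem_Icc] at hk
    have : (1:ℝ) ≤ (k:ℝ) := by exact_mod_cast hk.1
    apply div_nonneg <;> linarith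
  · intro k hk
    simp only [Finset.mem_Icc] at hk
    have hm : 1 ≤ 2*k - 1 := by omega
    have := termIneq (2*k-1) hm α h0 h1
    have he : 2*k - 1 + 1 = 2*k := by omega
    rw [he] at this
    have hc : ((2*k-1 : ℕ):ℝ) = 2*(k:ℝ)-1 := by
      push_cast [Nat.cast_sub (by omega : 1 ≤ 2*k)]; ring
    calc (2*(k:ℝ)-1)/(2*(k:ℝ)) = ((2*k-1:ℕ):ℝ)/(((2*k-1:ℕ):ℝ)+1) := by
          rw [hc]; ring_nf
      _ ≤ _ := this
end

section
/- Let r_j = binom(2j, j)/4^j. Then for all j ≥ 1, 1/√(π(j+1)) ≤ r_j ≤ 1/√(πj). -/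
/-!
The partial Wallis products `W k = ∏_{i<k} (2i+2)²/((2i+1)(2i+3))` satisfy
`W k = 1 / ((2k+1) r_k²)`, since `r_{k+1} = r_k (2k+1)/(2k+2)`. Comparing the integrals of
consecutive powers of `sin` on `[0, π]` gives `(2k+1)/(2k+2) · π/2 ≤ W k ≤ π/2`
(`Real.Wallis.le_W`, `Real.Wallis.W_le`), i.e.
`2/(π(2k+1)) ≤ r_k² ≤ 4(k+1)/(π(2k+1)²)`, which is slightly sharper than both claimed bounds.
-/

open Real Real.Wallis

lemma centralBinom_div_four_pow_succ (k : ℕ) :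
    ((k + 1).centralBinom : ℝ) / 4 ^ (k + 1) =
      (k.centralBinom / 4 ^ k) * ((2 * k + 1) / (2 * k + 2)) := by
  have h : ((k : ℝ) + 1) * (k + 1).centralBinom = 2 * (2 * k + 1) * k.centralBinom := by
    exact_mod_cast Nat.succ_mul_centralBinom_succ k
  field_simp
  linear_combination 2 * (4 : ℝ) ^ k * h

theorem sq_centralBinom_div_four_pow_mul_W (k : ℕ) :
    ((k.centralBinom : ℝ) / 4 ^ k) ^ 2 * (2 * k + 1) * W k = 1 := by
  induction k with
  | zero => simp [W]
  | succ k ih =>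
    calc _ = ((k.centralBinom : ℝ) / 4 ^ k) ^ 2 * (2 * k + 1) * W k := by
          rw [centralBinom_div_four_pow_succ, W_succ]
          push_cast
          field_simp
          ring
      _ = 1 := ih

theorem two_div_pi_mul_le_sq_centralBinom_div_four_pow (k : ℕ) :
    2 / (π * (2 * k + 1)) ≤ ((k.centralBinom : ℝ) / 4 ^ k) ^ 2 := by
  have hx : 0 ≤ ((k.centralBinom : ℝ) / 4 ^ k) ^ 2 * (2 * k + 1) := by positivity
  rw [div_le_iff₀ (by positivity)]
  nlinarith [sq_centralBinom_div_four_pow_mul_W k, mul_le_mul_of_nonneg_left (W_le k) hx]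

theorem sq_centralBinom_div_four_pow_le_four_mul_div_pi (k : ℕ) :
    ((k.centralBinom : ℝ) / 4 ^ k) ^ 2 ≤ 4 * (k + 1) / (π * (2 * k + 1) ^ 2) := by
  have hx : 0 ≤ ((k.centralBinom : ℝ) / 4 ^ k) ^ 2 * (2 * k + 1) := by positivity
  have hW := le_W k
  rw [div_mul_eq_mul_div, div_le_iff₀ (by positivity)] at hW
  rw [le_div_iff₀ (by positivity)]
  nlinarith [sq_centralBinom_div_four_pow_mul_W k, mul_le_mul_of_nonneg_left hW hx]

theorem stmt5 (j : ℕ) (hj : 1 ≤ j) :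
    1 / Real.sqrt (Real.pi * ((j:ℝ)+1)) ≤ (Nat.choose (2*j) j : ℝ) / 4^j ∧
    (Nat.choose (2*j) j : ℝ) / 4^j ≤ 1 / Real.sqrt (Real.pi * (j:ℝ)) := by
  have hj_pos : (0 : ℝ) < j := by exact_mod_cast hj
  rw [← Nat.centralBinom_eq_two_mul_choose, one_div, one_div, ← sqrt_inv, ← sqrt_inv]
  constructor
  · refine sqrt_le_iff.mpr ⟨by positivity,
      le_trans ?_ (two_div_pi_mul_le_sq_centralBinom_div_four_pow j)⟩
    rw [inv_eq_one_div, div_le_div_iff₀ (by positivity) (by positivity)]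
    nlinarith [pi_pos]
  · refine (le_sqrt (by positivity) (by positivity)).mpr
      (le_trans (sq_centralBinom_div_four_pow_le_four_mul_div_pi j) ?_)
    rw [inv_eq_one_div, div_le_div_iff₀ (by positivity) (by positivity)]
    nlinarith [pi_pos]
end

section
/- For all integers 1 ≤ j < k, ∑_{r=1}^{j} 1/√(r(r + k - j)) ≤ 1/√(1 + k - j) + 2·arsinh(√(j/(k-j))), and moreover if j ≥ ⌈k/2⌉ + 1 then ∑_{r=1}^{j} 1/√(r(r+k-j)) ≤ 2 log(9k/(k-j)). -/
/-!
Put `m = k - j`. Since `arsinh' x = 1 / √(1 + x ^ 2)` decreases on `[0, ∞)`, the mean value theorem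
gives `1 / √(r (r + m)) ≤ 2 (arsinh √(r / m) - arsinh √((r - 1) / m))`, so the sum telescopes to at
most `2 arsinh √(j / m)`. For the logarithmic bound, `arsinh √t ≤ log (2 (1 + t))` and
`2 (1 + j / m) = 2 k / m`.
-/

open Real Finset

lemma Finset.sum_Icc_one_le_sub_of_le_sub {G : Type*} [AddCommGroup G] [PartialOrder G]
    [IsOrderedAddMonoid G] {f F : ℕ → G} (h : ∀ r, f (r + 1) ≤ F (r + 1) - F r) (n : ℕ) :
    ∑ r ∈ Icc 1 n, f r ≤ F n - F 0 := by
  induction n with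
  | zero => simp
  | succ n ih =>
    rw [sum_Icc_succ_top (by omega), ← sub_add_sub_cancel' (F n)]
    exact add_le_add ih (h n)

namespace Real

lemma sub_div_sqrt_one_add_sq_le_arsinh_sub {a b : ℝ} (hb : 0 ≤ b) (hba : b ≤ a) :
    (a - b) / √(1 + a ^ 2) ≤ arsinh a - arsinh b := by
  rw [div_eq_inv_mul]
  refine (convex_Icc b a).mul_sub_le_image_sub_of_le_deriv continuous_arsinh.continuousOn
    differentiable_arsinh.differentiableOn (fun x hx => ?_) b (Set.left_mem_Icc.2 hba) a
    (Set.right_mem_Icc.2 hba) hba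
  rw [interior_Icc] at hx
  rw [(hasDerivAt_arsinh x).deriv]
  have hx0 : 0 ≤ x := hb.trans hx.1.le
  gcongr
  exact hx.2.le

lemma arsinh_sqrt_le_log {t : ℝ} (ht : 0 ≤ t) : arsinh √t ≤ log (2 * (1 + t)) := by
  rw [le_log_iff_exp_le (by positivity), exp_arsinh, sq_sqrt ht, two_mul]
  exact add_le_add ((sqrt_le_left (by positivity)).2 (by nlinarith))
    (sqrt_le_self_iff.2 (.inr (by linarith)))

lemma one_div_sqrt_le_two_mul_arsinh_sub {m r : ℝ} (hm : 0 < m) (hr : 0 ≤ r) :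
    1 / √((r + 1) * (r + 1 + m)) ≤ 2 * (arsinh √((r + 1) / m) - arsinh √(r / m)) := by
  set a := √((r + 1) / m)
  set b := √(r / m)
  have ha2 : a ^ 2 = (r + 1) / m := sq_sqrt (by positivity)
  have hb2 : b ^ 2 = r / m := sq_sqrt (by positivity)
  have hba : b ≤ a := sqrt_le_sqrt (by gcongr; linarith)
  have ha : 0 < a := sqrt_pos.2 (by positivity)
  have hsqrt : √((r + 1) * (r + 1 + m)) = m * a * √(1 + a ^ 2) := by
    rw [sqrt_eq_iff_mul_self_eq (by positivity) (by positivity),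
      show m * a * √(1 + a ^ 2) * (m * a * √(1 + a ^ 2)) = m ^ 2 * a ^ 2 * √(1 + a ^ 2) ^ 2 by ring,
      sq_sqrt (by positivity : 0 ≤ 1 + a ^ 2), ha2]
    field_simp
    ring
  have hdiff : 1 ≤ 2 * m * a * (a - b) := calc
    1 = m * (a ^ 2 - b ^ 2) := by rw [ha2, hb2]; field_simp; ring
    _ ≤ 2 * m * a * (a - b) := by nlinarith [mul_nonneg hm.le (sq_nonneg (a - b))]
  calc 1 / √((r + 1) * (r + 1 + m)) ≤ 2 * ((a - b) / √(1 + a ^ 2)) := by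
        rw [hsqrt, mul_div_assoc', div_le_div_iff₀ (by positivity) (by positivity)]
        nlinarith [mul_le_mul_of_nonneg_left hdiff (sqrt_nonneg (1 + a ^ 2))]
    _ ≤ 2 * (arsinh a - arsinh b) := by
        gcongr
        exact sub_div_sqrt_one_add_sq_le_arsinh_sub (sqrt_nonneg _) hba

lemma sum_Icc_one_div_sqrt_mul_add_le_two_mul_arsinh {m : ℝ} (hm : 0 < m) (n : ℕ) :
    ∑ r ∈ Icc 1 n, 1 / √((r : ℝ) * (r + m)) ≤ 2 * arsinh √(n / m) := by
  have key := Finset.sum_Icc_one_le_sub_of_le_sub (f := fun r : ℕ => 1 / √((r : ℝ) * (r + m)))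
    (F := fun r : ℕ => 2 * arsinh √(r / m)) (fun r => by
      push_cast
      linarith [one_div_sqrt_le_two_mul_arsinh_sub hm r.cast_nonneg]) n
  simpa using key

end Real

theorem stmt12_general (j k : ℕ) (hjk : j < k) :
    (∑ r ∈ Finset.Icc 1 j, 1 / Real.sqrt ((r:ℝ) * ((r:ℝ) + (k:ℝ) - (j:ℝ)))
        ≤ 1 / Real.sqrt (1 + (k:ℝ) - (j:ℝ))
          + 2 * Real.arsinh (Real.sqrt ((j:ℝ) / ((k:ℝ) - (j:ℝ))))) ∧
    ((k+1)/2 + 1 ≤ j →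
      ∑ r ∈ Finset.Icc 1 j, 1 / Real.sqrt ((r:ℝ) * ((r:ℝ) + (k:ℝ) - (j:ℝ)))
        ≤ 2 * Real.log (9 * (k:ℝ) / ((k:ℝ) - (j:ℝ)))) := by
  have hjk' : (j : ℝ) < k := by exact_mod_cast hjk
  have hm : (0 : ℝ) < k - j := sub_pos.2 hjk'
  have hk : (0 : ℝ) < k := (Nat.cast_nonneg j).trans_lt hjk'
  have hsum : ∑ r ∈ Icc 1 j, 1 / √((r : ℝ) * (r + k - j)) ≤ 2 * arsinh √(j / (k - j)) := by
    simpa only [add_sub_assoc] using sum_Icc_one_div_sqrt_mul_add_le_two_mul_arsinh hm j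
  refine ⟨hsum.trans (le_add_of_nonneg_left (by positivity)), fun _ => hsum.trans ?_⟩
  calc 2 * arsinh √(j / (k - j)) ≤ 2 * log (2 * (1 + j / (k - j))) := by
        gcongr
        exact arsinh_sqrt_le_log (by positivity)
    _ = 2 * log (2 * k / (k - j)) := by
        congr 2
        field_simp
        ring
    _ ≤ 2 * log (9 * k / (k - j)) := by gcongr; norm_num

theorem stmt12 (j k : ℕ) (hj : 1 ≤ j) (hjk : j < k) :
    (∑ r ∈ Finset.Icc 1 j, 1 / Real.sqrt ((r:ℝ) * ((r:ℝ) + (k:ℝ) - (j:ℝ)))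
        ≤ 1 / Real.sqrt (1 + (k:ℝ) - (j:ℝ))
          + 2 * Real.arsinh (Real.sqrt ((j:ℝ) / ((k:ℝ) - (j:ℝ))))) ∧
    ((k+1)/2 + 1 ≤ j →
      ∑ r ∈ Finset.Icc 1 j, 1 / Real.sqrt ((r:ℝ) * ((r:ℝ) + (k:ℝ) - (j:ℝ)))
        ≤ 2 * Real.log (9 * (k:ℝ) / ((k:ℝ) - (j:ℝ)))) :=
  stmt12_general j k hjk
end

section
/- Let n ≥ 2, β ∈ (0, 1/e), γ ≥ 1, and χ_m = β + (1−β)·((n/m)^γ − 1)/(n^γ − 1). Then (1/n)·∑_{m=1}^{n} χ_m² log m = Θ(β² log n), with implicit constants independent of n (for n sufficiently large). -/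
set_option maxHeartbeats 1000000

theorem stmt17 (β : ℝ) (hβ : β ∈ Set.Ioo 0 (Real.exp 1)⁻¹) (γ : ℝ) (hγ : 1 ≤ γ) :
    ∃ c C : ℝ, 0 < c ∧ 0 < C ∧ ∃ N : ℕ, ∀ n : ℕ, 2 ≤ n → N ≤ n →
      ∀ χ : ℕ → ℝ,
        (∀ m, χ m = β + (1-β) * (((n:ℝ)/(m:ℝ)) ^ γ - 1) / ((n:ℝ) ^ γ - 1)) →
        c * (β^2 * Real.log n) ≤
          (1/(n:ℝ)) * ∑ m ∈ Finset.Icc 1 n, (χ m)^2 * Real.log m ∧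
        (1/(n:ℝ)) * ∑ m ∈ Finset.Icc 1 n, (χ m)^2 * Real.log m ≤
          C * (β^2 * Real.log n) := by
  classical
  obtain ⟨hβ0, hβe⟩ := hβ
  have hβ1 : β < 1 := by
    have h1 : (Real.exp 1)⁻¹ < 1 := by
      rw [inv_lt_one_iff₀]
      right
      exact by nlinarith [Real.add_one_le_exp 1]
    linarith
  set M : ℕ := ⌈β⁻¹⌉₊ with hMdef
  have hM1 : 1 ≤ M := Nat.one_le_iff_ne_zero.mpr (by
    have : (0:ℝ) < β⁻¹ := by positivity
    simpa [hMdef] using Nat.ceil_pos.mpr this |>.ne')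
  have hMβ : β⁻¹ ≤ (M:ℝ) := Nat.le_ceil _
  have hMR1 : (1:ℝ) ≤ (M:ℝ) := by exact_mod_cast hM1
  have hlogM0 : 0 ≤ Real.log M := Real.log_nonneg hMR1
  have hlog2 : 0 < Real.log 2 := Real.log_pos (by norm_num)
  refine ⟨1/8, 4 + (M:ℝ) * Real.log M / (β^2 * Real.log 2), by norm_num, ?_, 4, ?_⟩
  · have : 0 ≤ (M:ℝ) * Real.log M / (β^2 * Real.log 2) := by positivity
    linarith
  intro n hn2 hn4 χ hχ
  have hγ0 : (0:ℝ) ≤ γ := by linarith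
  have hnR2 : (2:ℝ) ≤ n := by exact_mod_cast hn2
  have hnR4 : (4:ℝ) ≤ n := by exact_mod_cast hn4
  have hn1 : (1:ℝ) ≤ n := by linarith
  have hn0 : (0:ℝ) < n := by linarith
  have hlogn0 : 0 ≤ Real.log n := Real.log_nonneg hn1
  have hlogn2 : Real.log 2 ≤ Real.log n := Real.log_le_log (by norm_num) hnR2
  have hden : 0 < (n:ℝ)^γ - 1 := by
    have : (1:ℝ) < (n:ℝ)^γ :=
      Real.one_lt_rpow_iff_of_pos hn0 |>.mpr (Or.inl ⟨by linarith, by linarith⟩)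
    linarith
  -- key pointwise bounds on χ
  have key : ∀ m : ℕ, m ∈ Finset.Icc 1 n →
      β ≤ χ m ∧ χ m ≤ 1 ∧ χ m ≤ β + (m:ℝ)^(-γ) := by
    intro m hm
    obtain ⟨hm1, hmn⟩ := Finset.mem_Icc.mp hm
    have hmR1 : (1:ℝ) ≤ m := by exact_mod_cast hm1
    have hmR0 : (0:ℝ) < m := by linarith
    have hmRn : (m:ℝ) ≤ n := by exact_mod_cast hmn
    have hb1 : (1:ℝ) ≤ (n:ℝ)/m := (one_le_div hmR0).mpr hmRn
    have hnum0 : (1:ℝ) ≤ ((n:ℝ)/m)^γ := Real.one_le_rpow hb1 hγ0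
    have hnum_le : ((n:ℝ)/m)^γ ≤ (n:ℝ)^γ :=
      Real.rpow_le_rpow (by positivity) (div_le_self (by linarith) hmR1) hγ0
    have hmγ1 : (1:ℝ) ≤ (m:ℝ)^γ := Real.one_le_rpow hmR1 hγ0
    have hmγ0 : (0:ℝ) < (m:ℝ)^γ := by linarith
    have hfrac0 : 0 ≤ (((n:ℝ)/m)^γ - 1) / ((n:ℝ)^γ - 1) := div_nonneg (by linarith) hden.le
    have hfrac1 : (((n:ℝ)/m)^γ - 1) / ((n:ℝ)^γ - 1) ≤ 1 := (div_le_one hden).mpr (by linarith)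
    have hfracm : (((n:ℝ)/m)^γ - 1) / ((n:ℝ)^γ - 1) ≤ (m:ℝ)^(-γ) := by
      rw [div_le_iff₀ hden, Real.rpow_neg hmR0.le]
      have hdiv : ((n:ℝ)/m)^γ = (n:ℝ)^γ / (m:ℝ)^γ := Real.div_rpow hn0.le hmR0.le γ
      rw [hdiv]
      have hinv : ((m:ℝ)^γ)⁻¹ ≤ 1 := inv_le_one_of_one_le₀ hmγ1
      have hinv0 : 0 < ((m:ℝ)^γ)⁻¹ := by positivity
      rw [div_eq_mul_inv]
      nlinarith
    have hχm : χ m = β + (1-β) * ((((n:ℝ)/m)^γ - 1) / ((n:ℝ)^γ - 1)) := by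
      rw [hχ m, mul_div_assoc]
    constructor
    · rw [hχm]
      have : 0 ≤ (1-β) * ((((n:ℝ)/m)^γ - 1) / ((n:ℝ)^γ - 1)) :=
        mul_nonneg (by linarith) hfrac0
      linarith
    constructor
    · rw [hχm]
      have : (1-β) * ((((n:ℝ)/m)^γ - 1) / ((n:ℝ)^γ - 1)) ≤ (1-β) * 1 :=
        mul_le_mul_of_nonneg_left hfrac1 (by linarith)
      linarith
    · rw [hχm]
      have h1 : (1-β) * ((((n:ℝ)/m)^γ - 1) / ((n:ℝ)^γ - 1)) ≤
          1 * ((((n:ℝ)/m)^γ - 1) / ((n:ℝ)^γ - 1)) :=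
        mul_le_mul_of_nonneg_right (by linarith) hfrac0
      linarith
  constructor
  · -- lower bound
    have hsub : Finset.Icc (n/2+1) n ⊆ Finset.Icc 1 n := Finset.Icc_subset_Icc (by omega) le_rfl
    have hlog4 : Real.log 4 = 2 * Real.log 2 := by
      rw [show (4:ℝ) = 2^2 by norm_num, Real.log_pow]
      push_cast; ring
    have hlogn4 : 2 * Real.log 2 ≤ Real.log n := by
      rw [← hlog4]; exact Real.log_le_log (by norm_num) hnR4
    have hterm : ∀ m ∈ Finset.Icc (n/2+1) n,
        β^2 * (Real.log n / 2) ≤ (χ m)^2 * Real.log m := by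
      intro m hm
      obtain ⟨hml, hmu⟩ := Finset.mem_Icc.mp hm
      obtain ⟨hβχ, _, _⟩ := key m (hsub hm)
      have hmhalf : (n:ℝ)/2 ≤ m := by
        have h1 : n < 2 * (n/2 + 1) := by omega
        have h2 : ((n:ℝ)) < 2 * ((n/2 + 1 : ℕ):ℝ) := by exact_mod_cast h1
        have h3 : ((n/2+1:ℕ):ℝ) ≤ m := by exact_mod_cast hml
        linarith
    -- log m ≥ log n - log 2 ≥ log n / 2
      have hlogm : Real.log n - Real.log 2 ≤ Real.log m := by
        have : Real.log ((n:ℝ)/2) ≤ Real.log m :=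
          Real.log_le_log (by linarith) hmhalf
        rwa [Real.log_div (by linarith) two_ne_zero] at this
      have hlogm2 : Real.log n / 2 ≤ Real.log m := by linarith
      have hχsq : β^2 ≤ (χ m)^2 := by nlinarith
      have h0 : 0 ≤ Real.log n / 2 := by linarith
      calc β^2 * (Real.log n / 2) ≤ (χ m)^2 * (Real.log n / 2) :=
            mul_le_mul_of_nonneg_right hχsq h0
        _ ≤ (χ m)^2 * Real.log m :=
            mul_le_mul_of_nonneg_left hlogm2 (sq_nonneg _)
    have hsum1 : ((Finset.Icc (n/2+1) n).card : ℝ) * (β^2 * (Real.log n / 2)) ≤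
        ∑ m ∈ Finset.Icc (n/2+1) n, (χ m)^2 * Real.log m := by
      have := Finset.card_nsmul_le_sum (Finset.Icc (n/2+1) n)
        (fun m => (χ m)^2 * Real.log m) (β^2 * (Real.log n / 2)) hterm
      simpa [nsmul_eq_mul] using this
    have hsum2 : ∑ m ∈ Finset.Icc (n/2+1) n, (χ m)^2 * Real.log m ≤
        ∑ m ∈ Finset.Icc 1 n, (χ m)^2 * Real.log m := by
      apply Finset.sum_le_sum_of_subset_of_nonneg hsub
      intro m hm _
      obtain ⟨hm1, _⟩ := Finset.mem_Icc.mp hm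
      have : (1:ℝ) ≤ m := by exact_mod_cast hm1
      have := Real.log_nonneg this
      positivity
    have hcard : (n:ℝ)/4 ≤ ((Finset.Icc (n/2+1) n).card : ℝ) := by
      rw [Nat.card_Icc]
      have h1 : n ≤ 4 * (n + 1 - (n/2+1)) := by omega
      have h2 : (n:ℝ) ≤ 4 * ((n + 1 - (n/2+1) : ℕ):ℝ) := by exact_mod_cast h1
      linarith
    have hS : (n:ℝ)/4 * (β^2 * (Real.log n / 2)) ≤
        ∑ m ∈ Finset.Icc 1 n, (χ m)^2 * Real.log m := by
      have h0 : 0 ≤ β^2 * (Real.log n / 2) := by positivity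
      calc (n:ℝ)/4 * (β^2 * (Real.log n / 2))
          ≤ ((Finset.Icc (n/2+1) n).card : ℝ) * (β^2 * (Real.log n / 2)) :=
            mul_le_mul_of_nonneg_right hcard h0
        _ ≤ _ := le_trans hsum1 hsum2
    have heq : (1/(n:ℝ)) * ((n:ℝ)/4 * (β^2 * (Real.log n / 2))) =
        1/8 * (β^2 * Real.log n) := by
      have hne : (n:ℝ) ≠ 0 := ne_of_gt hn0
      calc (1/(n:ℝ)) * ((n:ℝ)/4 * (β^2 * (Real.log n / 2)))
          = ((n:ℝ) * (1/(n:ℝ))) * (β^2 * Real.log n / 8) := by ring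
        _ = 1/8 * (β^2 * Real.log n) := by rw [mul_one_div_cancel hne]; ring
    calc (1:ℝ)/8 * (β^2 * Real.log n)
        = (1/(n:ℝ)) * ((n:ℝ)/4 * (β^2 * (Real.log n / 2))) := heq.symm
      _ ≤ (1/(n:ℝ)) * ∑ m ∈ Finset.Icc 1 n, (χ m)^2 * Real.log m :=
          mul_le_mul_of_nonneg_left hS (by positivity)
  · -- upper bound
    have hterm : ∀ m ∈ Finset.Icc 1 n, (χ m)^2 * Real.log m ≤
        (if m < M then Real.log M else 0) + 4 * β^2 * Real.log m := by
      intro m hm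
      obtain ⟨hm1, hmn⟩ := Finset.mem_Icc.mp hm
      have hmR1 : (1:ℝ) ≤ m := by exact_mod_cast hm1
      have hmR0 : (0:ℝ) < m := by linarith
      have hlogm0 : 0 ≤ Real.log m := Real.log_nonneg hmR1
      obtain ⟨hβχ, hχ1, hχub⟩ := key m hm
      have hχ0 : 0 ≤ χ m := le_trans hβ0.le hβχ
      by_cases hcase : m < M
      · rw [if_pos hcase]
        have hlogm : Real.log m ≤ Real.log M :=
          Real.log_le_log hmR0 (by exact_mod_cast hcase.le)
        have hsq : (χ m)^2 ≤ 1 := by nlinarith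
        have h1 : (χ m)^2 * Real.log m ≤ Real.log m := by nlinarith
        have h2 : 0 ≤ 4 * β^2 * Real.log m := by positivity
        linarith
      · rw [if_neg hcase]
        push_neg at hcase
        have hmM : (M:ℝ) ≤ m := by exact_mod_cast hcase
        have h1 : (m:ℝ)^(-γ) ≤ (m:ℝ)^(-(1:ℝ)) :=
          Real.rpow_le_rpow_of_exponent_le hmR1 (by linarith)
        have h2 : (m:ℝ)^(-(1:ℝ)) = ((m:ℝ))⁻¹ := by
          rw [Real.rpow_neg_one]
        have h3 : ((m:ℝ))⁻¹ ≤ ((M:ℝ))⁻¹ := by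
          apply inv_anti₀ (by linarith) hmM
        have h4 : ((M:ℝ))⁻¹ ≤ β := by
          rw [inv_le_comm₀ (by linarith) hβ0]
          exact hMβ
        have hχ2β : χ m ≤ 2 * β := by
          have := hχub
          rw [h2] at h1
          linarith
        have hsq : (χ m)^2 ≤ 4 * β^2 := by nlinarith
        have : (χ m)^2 * Real.log m ≤ 4 * β^2 * Real.log m :=
          mul_le_mul_of_nonneg_right hsq hlogm0
        linarith
    have hsumle : ∑ m ∈ Finset.Icc 1 n, (χ m)^2 * Real.log m ≤
        ∑ m ∈ Finset.Icc 1 n, ((if m < M then Real.log M else 0) + 4 * β^2 * Real.log m) :=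
      Finset.sum_le_sum hterm
    have hind : ∑ m ∈ Finset.Icc 1 n, (if m < M then Real.log M else 0) ≤
        (M:ℝ) * Real.log M := by
      rw [← Finset.sum_filter]
      rw [Finset.sum_const, nsmul_eq_mul]
      have hcardle : (((Finset.Icc 1 n).filter (· < M)).card : ℝ) ≤ (M:ℝ) := by
        have hsub2 : (Finset.Icc 1 n).filter (· < M) ⊆ Finset.Ico 1 M := by
          intro x hx
          simp only [Finset.mem_filter, Finset.mem_Icc, Finset.mem_Ico] at *
          omega
        have := Finset.card_le_card hsub2
        rw [Nat.card_Ico] at this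
        have : ((Finset.Icc 1 n).filter (· < M)).card ≤ M := by omega
        exact_mod_cast this
      exact mul_le_mul_of_nonneg_right hcardle hlogM0
    have hlogsum : ∑ m ∈ Finset.Icc 1 n, 4 * β^2 * Real.log m ≤
        4 * β^2 * ((n:ℝ) * Real.log n) := by
      have h : ∀ m ∈ Finset.Icc 1 n, 4 * β^2 * Real.log m ≤ 4 * β^2 * Real.log n := by
        intro m hm
        obtain ⟨hm1, hmn⟩ := Finset.mem_Icc.mp hm
        have hmR0 : (0:ℝ) < m := by exact_mod_cast hm1
        have hmRn : (m:ℝ) ≤ n := by exact_mod_cast hmn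
        exact mul_le_mul_of_nonneg_left (Real.log_le_log hmR0 hmRn) (by positivity)
      have := Finset.sum_le_card_nsmul (Finset.Icc 1 n)
        (fun m => 4 * β^2 * Real.log m) (4 * β^2 * Real.log n) h
      rw [Nat.card_Icc] at this
      have hcast : ((n + 1 - 1 : ℕ):ℝ) = (n:ℝ) := by push_cast; ring
      rw [nsmul_eq_mul, hcast] at this
      linarith
    have hStot : ∑ m ∈ Finset.Icc 1 n, (χ m)^2 * Real.log m ≤
        (M:ℝ) * Real.log M + 4 * β^2 * ((n:ℝ) * Real.log n) := by
      rw [Finset.sum_add_distrib] at hsumle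
      linarith
    have hfinal : (1/(n:ℝ)) * ((M:ℝ) * Real.log M + 4 * β^2 * ((n:ℝ) * Real.log n)) ≤
        (4 + (M:ℝ) * Real.log M / (β^2 * Real.log 2)) * (β^2 * Real.log n) := by
      have h1 : (1/(n:ℝ)) * ((M:ℝ) * Real.log M + 4 * β^2 * ((n:ℝ) * Real.log n)) =
          (M:ℝ) * Real.log M / n + 4 * β^2 * Real.log n := by
        field_simp
      have h2 : (M:ℝ) * Real.log M / n ≤ (M:ℝ) * Real.log M := by
        rw [div_le_iff₀ hn0]
        nlinarith [mul_nonneg (Nat.cast_nonneg M : (0:ℝ) ≤ M) hlogM0]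
      have h3 : (M:ℝ) * Real.log M =
          ((M:ℝ) * Real.log M / (β^2 * Real.log 2)) * (β^2 * Real.log 2) := by
        field_simp
      have h4 : ((M:ℝ) * Real.log M / (β^2 * Real.log 2)) * (β^2 * Real.log 2) ≤
          ((M:ℝ) * Real.log M / (β^2 * Real.log 2)) * (β^2 * Real.log n) := by
        apply mul_le_mul_of_nonneg_left _ (by positivity)
        nlinarith [sq_nonneg β]
      rw [h1]
      nlinarith [h2, h3, h4]
    calc (1/(n:ℝ)) * ∑ m ∈ Finset.Icc 1 n, (χ m)^2 * Real.log m
        ≤ (1/(n:ℝ)) * ((M:ℝ) * Real.log M + 4 * β^2 * ((n:ℝ) * Real.log n)) :=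
          mul_le_mul_of_nonneg_left hStot (by positivity)
      _ ≤ _ := hfinal
end
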